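/- Rhombic quadratic identity (first identity of the rhombic proposition): for every integer n and every real r, Σ_{i+j=n} a_i a_j J_i(r) J_j(r) = (2/3)·a_n·J_{−n}(r) + (1/9)·(1 + 2cos(2nπ/3))·J_n(2r), where a_k = (1/3)(1 − 2cos(2kπ/3)). -/

import Mathlib

/-!
The rhombic pattern `u_R(r, ·)` is a combination of three plane waves `exp (i s cos (θ + φ))`,
and the `k`-th Fourier coefficient of such a wave is `exp (i k φ) i^k J_k(s)` (Hansen–Bessel).
Hence `u_R(r, ·)` has Fourier coefficients `i^k a_k J_k(r)`, and by Parseval the convolution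
sum is `i^(-n)` times the `n`-th Fourier coefficient of `u_R(r, ·)²`. Because
`cos θ + cos (θ + 2π/3) + cos (θ - 2π/3) = 0`, the product of two of the three waves is the
third one with `r` replaced by `-r`, so
`u_R(r, ·)² = (1/9) (three plane waves of amplitude 2r) + (2/3) u_R(-r, ·)`;
reading off the `n`-th coefficient and using `J_n(-r) = J_{-n}(r)` gives the identity.
-/

open Complex MeasureTheory AddCircle
open scoped Real ComplexConjugate InnerProductSpace

/-- Bessel function of the first kind of integer order `n`, defined via the
Hansen--Bessel formula. -/
noncomputable def besselJ (n : ℤ) (r : ℝ) : ℝ :=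
  ((2 * Real.pi : ℂ)⁻¹ * ∫ θ in (0:ℝ)..(2 * Real.pi),
    Complex.exp (Complex.I * ((r * Real.cos θ - (n : ℝ) * (θ + Real.pi / 2) : ℝ) : ℂ))).re

/-- Bessel coefficients of the rhombic pattern. -/
noncomputable def rhombCoeff (k : ℤ) : ℝ := 1/3 * (1 - 2 * Real.cos (2 * (k : ℝ) * Real.pi / 3))

section FourierCoeff

variable {T : ℝ} [Fact (0 < T)]

theorem fourierCoeff_sub {E : Type*} [NormedAddCommGroup E] [NormedSpace ℂ E] [CompleteSpace E]
    {f g : AddCircle T → E} (hf : Integrable f haarAddCircle) (hg : Integrable g haarAddCircle) :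
    fourierCoeff (f - g) = fourierCoeff f - fourierCoeff g := by
  ext n
  simpa [fourierCoeff, -fourier_apply, smul_sub] using
    integral_sub (hf.fourier_smul (-n)) (hg.fourier_smul (-n))

theorem fourierCoeff_conj (f : AddCircle T → ℂ) (n : ℤ) :
    fourierCoeff (fun t => conj (f t)) n = conj (fourierCoeff f (-n)) := by
  simp only [fourierCoeff, ← integral_conj, smul_eq_mul, map_mul, neg_neg, fourier_neg (n := n)]

theorem fourierCoeff_fourier_mul (f : AddCircle T → ℂ) (m n : ℤ) :
    fourierCoeff (fun t => fourier m t * f t) n = fourierCoeff f (n - m) := by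
  simp only [fourierCoeff, smul_eq_mul, ← mul_assoc, ← fourier_add, neg_sub]
  congr! 4 with t
  congr 1
  ring

theorem hasSum_fourierCoeff_mul_fourierCoeff {f g : AddCircle T → ℂ}
    (hf : MemLp f 2 haarAddCircle) (hg : MemLp g 2 haarAddCircle) (n : ℤ) :
    HasSum (fun i => fourierCoeff f i * fourierCoeff g (n - i)) (fourierCoeff (f * g) n) := by
  have hf' : MemLp (fun t => conj (f t)) 2 haarAddCircle := hf.star
  have hg' : MemLp (fun t => fourier (-n) t * g t) 2 haarAddCircle := by
    refine hg.of_le ((map_continuous _).aestronglyMeasurable.mul hg.1) (ae_of_all _ fun t => ?_)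
    rw [norm_mul, fourier_apply, Circle.norm_coe, one_mul]
  have h_inner : ⟪hf'.toLp, hg'.toLp⟫_ℂ = fourierCoeff (f * g) n := by
    rw [L2.inner_def, fourierCoeff]
    refine integral_congr_ae ?_
    filter_upwards [hf'.coeFn_toLp, hg'.coeFn_toLp] with t hft hgt
    rw [RCLike.inner_apply', hft, hgt, conj_conj, smul_eq_mul, Pi.mul_apply]
    ring
  have h_coeff (i : ℤ) : ⟪hf'.toLp, fourierBasis i⟫_ℂ * ⟪fourierBasis i, hg'.toLp⟫_ℂ
      = fourierCoeff f (-i) * fourierCoeff g (n - -i) := by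
    rw [← inner_conj_symm, ← HilbertBasis.repr_apply_apply, ← HilbertBasis.repr_apply_apply,
      fourierBasis_repr, fourierBasis_repr, fourierCoeff_congr_ae hf'.coeFn_toLp,
      fourierCoeff_congr_ae hg'.coeFn_toLp, fourierCoeff_conj, fourierCoeff_fourier_mul, conj_conj]
    ring_nf
  -- Parseval's identity for `conj f` and `fourier (-n) * g`
  have key := fourierBasis.hasSum_inner_mul_inner hf'.toLp hg'.toLp
  simp only [h_coeff, h_inner] at key
  exact (Equiv.neg ℤ).hasSum_iff.mp key

end FourierCoeff

theorem ofReal_besselJ (n : ℤ) (r : ℝ) :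
    (besselJ n r : ℂ) = (2 * π : ℂ)⁻¹ * ∫ θ in (0 : ℝ)..2 * π,
      exp (I * ↑(r * Real.cos θ - n * (θ + π / 2))) := by
  set F : ℝ → ℂ := fun θ => exp (I * ↑(r * Real.cos θ - n * (θ + π / 2)))
  have hF : Function.Periodic F (2 * π) := fun θ => by
    simp only [F, Real.cos_add_two_pi]
    rw [show I * ↑(r * Real.cos θ - n * (θ + 2 * π + π / 2))
        = I * ↑(r * Real.cos θ - n * (θ + π / 2)) + (-n : ℤ) * (2 * π * I) by push_cast; ring,
      exp_add, exp_int_mul_two_pi_mul_I, mul_one]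
  -- the reflection `θ ↦ π - θ` conjugates the integrand
  have hF_conj (θ : ℝ) : conj (F θ) = F (π - θ) := by
    simp only [F, ← exp_conj, map_mul, conj_I, conj_ofReal, Real.cos_pi_sub]
    rw [show I * ↑(r * -Real.cos θ - n * (π - θ + π / 2))
        = -I * ↑(r * Real.cos θ - n * (θ + π / 2)) + (-n : ℤ) * (2 * π * I) by push_cast; ring,
      exp_add, exp_int_mul_two_pi_mul_I, mul_one]
  have h_real : conj ((2 * π : ℂ)⁻¹ * ∫ θ in (0 : ℝ)..2 * π, F θ)
      = (2 * π : ℂ)⁻¹ * ∫ θ in (0 : ℝ)..2 * π, F θ := by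
    rw [map_mul, ← intervalIntegral.intervalIntegral_conj]
    simp only [hF_conj, intervalIntegral.integral_comp_sub_left F π, map_inv₀, map_mul,
      conj_ofReal, map_ofNat]
    have := hF.intervalIntegral_add_eq (-π) 0
    rw [zero_add, show -π + 2 * π = π by ring] at this
    rw [show π - 2 * π = -π by ring, sub_zero, this]
  exact conj_eq_iff_re.mp h_real

instance fact_two_pi_pos : Fact (0 < 2 * π) := ⟨Real.two_pi_pos⟩

theorem periodic_exp_mul_cos_add (s φ : ℝ) :
    Function.Periodic (fun θ : ℝ => exp (I * ↑(s * Real.cos (θ + φ)))) (2 * π) := fun θ => by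
  simp only [add_right_comm θ (2 * π), Real.cos_add_two_pi]

noncomputable def planeWave (s φ : ℝ) : AddCircle (2 * π) → ℂ :=
  (periodic_exp_mul_cos_add s φ).lift

@[simp] theorem planeWave_coe (s φ θ : ℝ) :
    planeWave s φ θ = exp (I * ↑(s * Real.cos (θ + φ))) := rfl

theorem continuous_planeWave (s φ : ℝ) : Continuous (planeWave s φ) :=
  continuous_coinduced_dom.mpr
    (by fun_prop : Continuous fun θ : ℝ => exp (I * ↑(s * Real.cos (θ + φ))))

theorem integrable_planeWave (s φ : ℝ) : Integrable (planeWave s φ) haarAddCircle :=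
  (continuous_planeWave s φ).integrable_of_hasCompactSupport (.of_compactSpace _)

theorem I_zpow_eq_exp (k : ℤ) : I ^ k = exp (k * (π / 2 * I)) := by
  rw [exp_int_mul, exp_pi_div_two_mul_I]

theorem fourierCoeff_planeWave (s φ : ℝ) (k : ℤ) :
    fourierCoeff (planeWave s φ) k = exp (I * k * φ) * I ^ k * besselJ k s := by
  have h_integrand (x : ℝ) : fourier (-k) (x : AddCircle (2 * π)) • planeWave s φ x
      = exp (I * k * φ) * I ^ k * exp (I * ↑(s * Real.cos (x + φ) - k * (x + φ + π / 2))) := by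
    rw [fourier_coe_apply, planeWave_coe, smul_eq_mul, I_zpow_eq_exp, ← exp_add, ← exp_add,
      ← exp_add]
    congr 1
    push_cast
    field_simp
    ring
  rw [fourierCoeff_eq_intervalIntegral _ k (-φ), ofReal_besselJ]
  simp only [h_integrand, intervalIntegral.integral_const_mul,
    intervalIntegral.integral_comp_add_right
      (fun θ => exp (I * ↑(s * Real.cos θ - k * (θ + π / 2)))) φ]
  rw [neg_add_cancel, neg_add_cancel_comm, Complex.real_smul]
  push_cast
  ring

theorem planeWave_mul_planeWave {s₁ φ₁ s₂ φ₂ s φ : ℝ}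
    (h : ∀ θ, s₁ * Real.cos (θ + φ₁) + s₂ * Real.cos (θ + φ₂) = s * Real.cos (θ + φ)) :
    planeWave s₁ φ₁ * planeWave s₂ φ₂ = planeWave s φ := by
  ext t
  induction t using QuotientAddGroup.induction_on with | H θ => ?_
  rw [Pi.mul_apply, planeWave_coe, planeWave_coe, planeWave_coe, ← exp_add, ← mul_add,
    ← ofReal_add, h]

theorem conj_planeWave (s φ : ℝ) : (fun t => conj (planeWave s φ t)) = planeWave (-s) φ := by
  ext t
  induction t using QuotientAddGroup.induction_on with | H θ => ?_
  rw [planeWave_coe, planeWave_coe, ← exp_conj, map_mul, conj_I, conj_ofReal, neg_mul,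
    ofReal_mul, ofReal_mul, ofReal_neg, neg_mul, mul_neg]

theorem besselJ_neg (n : ℤ) (r : ℝ) : besselJ (-n) r = besselJ n (-r) := by
  have h := fourierCoeff_conj (planeWave r 0) n
  rw [conj_planeWave, fourierCoeff_planeWave, fourierCoeff_planeWave] at h
  simp only [map_mul, map_zpow₀, conj_I, conj_ofReal, ofReal_zero, mul_zero, exp_zero,
    one_mul] at h
  rw [← inv_zpow', inv_neg, inv_I, neg_neg] at h
  exact ofReal_injective (mul_left_cancel₀ (zpow_ne_zero n I_ne_zero) h).symm

theorem fourierCoeff_planeWave_add_planeWave_neg (s α : ℝ) (k : ℤ) :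
    fourierCoeff (planeWave s α + planeWave s (-α)) k
      = 2 * Real.cos (k * α) * I ^ k * besselJ k s := by
  rw [fourierCoeff.add (integrable_planeWave s α) (integrable_planeWave s (-α)), Pi.add_apply,
    fourierCoeff_planeWave, fourierCoeff_planeWave, ofReal_cos, two_cos]
  push_cast
  ring_nf

noncomputable def rhombicPattern (r : ℝ) : AddCircle (2 * π) → ℂ :=
  (1 / 3 : ℂ) • (planeWave r 0 - (planeWave r (2 * π / 3) + planeWave r (-(2 * π / 3))))

theorem continuous_rhombicPattern (r : ℝ) : Continuous (rhombicPattern r) :=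
  ((continuous_planeWave r 0).sub
    ((continuous_planeWave r _).add (continuous_planeWave r _))).const_smul _

theorem fourierCoeff_rhombicPattern (r : ℝ) (k : ℤ) :
    fourierCoeff (rhombicPattern r) k = rhombCoeff k * (I ^ k * besselJ k r) := by
  rw [rhombicPattern, fourierCoeff.const_smul, fourierCoeff_sub (integrable_planeWave r 0)
    ((integrable_planeWave r _).add (integrable_planeWave r _)), Pi.sub_apply,
    fourierCoeff_planeWave, ofReal_zero, mul_zero, exp_zero, one_mul,
    fourierCoeff_planeWave_add_planeWave_neg, rhombCoeff,
    show (k : ℝ) * (2 * π / 3) = 2 * k * π / 3 by ring]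
  push_cast
  ring_nf

theorem Real.cos_add_cos_add_two_pi_div_three_add_cos_sub_two_pi_div_three (θ : ℝ) :
    Real.cos θ + Real.cos (θ + 2 * π / 3) + Real.cos (θ - 2 * π / 3) = 0 := by
  have h : Real.cos (2 * π / 3) = -(1 / 2) := by
    rw [show 2 * π / 3 = π - π / 3 by ring, Real.cos_pi_sub, Real.cos_pi_div_three]
  rw [add_assoc, Real.cos_add_cos, show (θ + 2 * π / 3 + (θ - 2 * π / 3)) / 2 = θ by ring,
    show (θ + 2 * π / 3 - (θ - 2 * π / 3)) / 2 = 2 * π / 3 by ring, h]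
  ring

theorem rhombicPattern_mul_self (r : ℝ) :
    rhombicPattern r * rhombicPattern r =
      (1 / 9 : ℂ) • (planeWave (2 * r) 0
        + (planeWave (2 * r) (2 * π / 3) + planeWave (2 * r) (-(2 * π / 3))))
      + (2 / 3 : ℂ) • rhombicPattern (-r) := by
  have h_sum := Real.cos_add_cos_add_two_pi_div_three_add_cos_sub_two_pi_div_three
  have h_sq (φ : ℝ) : planeWave r φ * planeWave r φ = planeWave (2 * r) φ :=
    planeWave_mul_planeWave fun θ => by ring
  have h₁ : planeWave r 0 * planeWave r (2 * π / 3) = planeWave (-r) (-(2 * π / 3)) :=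
    planeWave_mul_planeWave fun θ => by linear_combination (norm := ring_nf) r * h_sum θ
  have h₂ : planeWave r 0 * planeWave r (-(2 * π / 3)) = planeWave (-r) (2 * π / 3) :=
    planeWave_mul_planeWave fun θ => by linear_combination (norm := ring_nf) r * h_sum θ
  have h₃ : planeWave r (2 * π / 3) * planeWave r (-(2 * π / 3)) = planeWave (-r) 0 :=
    planeWave_mul_planeWave fun θ => by linear_combination (norm := ring_nf) r * h_sum θ
  ext t
  have h_sq' (φ : ℝ) := congrFun (h_sq φ) t
  have h₁' := congrFun h₁ t
  have h₂' := congrFun h₂ t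
  have h₃' := congrFun h₃ t
  simp only [rhombicPattern, Pi.mul_apply, Pi.add_apply, Pi.sub_apply, Pi.smul_apply,
    smul_eq_mul] at h_sq' h₁' h₂' h₃' ⊢
  linear_combination (1 / 9 : ℂ) * (h_sq' 0 + h_sq' (2 * π / 3) + h_sq' (-(2 * π / 3)))
    - (2 / 9 : ℂ) * (h₁' + h₂' - h₃')

theorem integrable_rhombicPattern (r : ℝ) : Integrable (rhombicPattern r) haarAddCircle :=
  (continuous_rhombicPattern r).integrable_of_hasCompactSupport (.of_compactSpace _)

theorem fourierCoeff_rhombicPattern_mul_self (r : ℝ) (n : ℤ) :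
    fourierCoeff (rhombicPattern r * rhombicPattern r) n =
      I ^ n * ↑(2 / 3 * rhombCoeff n * besselJ (-n) r
        + 1 / 9 * (1 + 2 * Real.cos (2 * n * π / 3)) * besselJ n (2 * r)) := by
  have h_int := (integrable_planeWave (2 * r) 0).add
    ((integrable_planeWave (2 * r) (2 * π / 3)).add (integrable_planeWave (2 * r) (-(2 * π / 3))))
  rw [rhombicPattern_mul_self,
    fourierCoeff.add (h_int.smul _) ((integrable_rhombicPattern _).smul _), Pi.add_apply,
    fourierCoeff.const_smul, fourierCoeff.const_smul, fourierCoeff.add (integrable_planeWave _ _)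
      ((integrable_planeWave _ _).add (integrable_planeWave _ _)),
    Pi.add_apply, fourierCoeff_planeWave, fourierCoeff_planeWave_add_planeWave_neg,
    fourierCoeff_rhombicPattern, besselJ_neg, ofReal_zero, mul_zero, exp_zero, one_mul,
    show (n : ℝ) * (2 * π / 3) = 2 * n * π / 3 by ring]
  push_cast
  ring

/-- Rhombic quadratic identity. -/
theorem rhombic_quadratic_one (n : ℤ) (r : ℝ) :
    Summable (fun i : ℤ =>
      rhombCoeff i * rhombCoeff (n - i) * besselJ i r * besselJ (n - i) r) ∧
    (∑' i : ℤ, rhombCoeff i * rhombCoeff (n - i) * besselJ i r * besselJ (n - i) r)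
      = 2/3 * rhombCoeff n * besselJ (-n) r
        + 1/9 * (1 + 2 * Real.cos (2 * (n : ℝ) * Real.pi / 3)) * besselJ n (2 * r) := by
  have h_memLp : MemLp (rhombicPattern r) 2 haarAddCircle :=
    ContinuousMap.memLp (μ := haarAddCircle) ℂ ⟨_, continuous_rhombicPattern r⟩
  have h_term (i : ℤ) :
      fourierCoeff (rhombicPattern r) i * fourierCoeff (rhombicPattern r) (n - i)
        = I ^ n * ↑(rhombCoeff i * rhombCoeff (n - i) * besselJ i r * besselJ (n - i) r) := by
    rw [fourierCoeff_rhombicPattern, fourierCoeff_rhombicPattern,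
      ← add_sub_cancel i n, zpow_add₀ I_ne_zero, add_sub_cancel_left]
    push_cast
    ring
  have h := hasSum_fourierCoeff_mul_fourierCoeff h_memLp h_memLp n
  simp only [h_term, fourierCoeff_rhombicPattern_mul_self] at h
  have h_real := hasSum_ofReal.mp ((hasSum_mul_left_iff (zpow_ne_zero n I_ne_zero)).mp h)
  exact ⟨h_real.summable, h_real.tsum_eq⟩
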